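/- arXiv:2509.10470 — 6 statements merged into one kernel-verified Lean document; each statement's English description precedes it below -/
import Mathlib

section
/- Let Q(λ,μ) = λ²A₂₀ + λμA₁₁ + μ²A₀₂ + λA₁₀ + μA₀₁ + A₀₀ be an n×n quadratic two-parameter matrix polynomial over ℂ, and let C(λ,μ) = λL₁ + μL₂ + L₀ be the 3n×3n companion pencil with L₁ = [[A₂₀,A₁₁,0],[0,0,0],[0,0,I]], L₂ = [[0,A₀₂,0],[0,0,I],[0,0,0]], L₀ = [[A₁₀,A₀₁,A₀₀],[0,-I,0],[-I,0,0]]. Then for any (λ,μ) ∈ ℂ×ℂ and nonzero x ∈ ℂⁿ, Q(λ,μ)x = 0 if and only if C(λ,μ)(Λ ⊗ x) = 0, where Λ = (λ, μ, 1)ᵀ. -/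
open Matrix

/-- Q(λ,μ) = λ²A₂₀ + λμA₁₁ + μ²A₀₂ + λA₁₀ + μA₀₁ + A₀₀ -/
noncomputable def quadQ {n : ℕ} (A20 A11 A02 A10 A01 A00 : Matrix (Fin n) (Fin n) ℂ)
    (l m : ℂ) : Matrix (Fin n) (Fin n) ℂ :=
  (l ^ 2) • A20 + (l * m) • A11 + (m ^ 2) • A02 + l • A10 + m • A01 + A00

/-- The companion pencil C(λ,μ) = λL₁ + μL₂ + L₀, realized as a 3×3 block matrix. -/
noncomputable def companionC {n : ℕ} (A20 A11 A02 A10 A01 A00 : Matrix (Fin n) (Fin n) ℂ)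
    (l m : ℂ) : Matrix (Fin 3 × Fin n) (Fin 3 × Fin n) ℂ :=
  fun p q =>
    (l • (![![A20, A11, 0], ![0, 0, 0], ![0, 0, (1 : Matrix (Fin n) (Fin n) ℂ)]] p.1 q.1)
      + m • (![![0, A02, 0], ![0, 0, (1 : Matrix (Fin n) (Fin n) ℂ)], ![0, 0, 0]] p.1 q.1)
      + (![![A10, A01, A00], ![0, -(1 : Matrix (Fin n) (Fin n) ℂ), 0],
          ![-(1 : Matrix (Fin n) (Fin n) ℂ), 0, 0]] p.1 q.1)) p.2 q.2

/-! Applied to `Λ ⊗ x`, the first block row of the pencil reproduces `Q(λ,μ)x`, while the other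
two block rows give `μx - μx` and `λx - λx`; hence `C(λ,μ)(Λ ⊗ x) = (Q(λ,μ)x, 0, 0)`. -/

section BlockKronecker

variable {ι κ α β R : Type*} [Fintype κ] [Fintype β] [CommSemiring R]

theorem mulVec_blockwise_kronecker (B : ι → κ → Matrix α β R) (v : κ → R) (x : β → R) :
    (fun p q => B p.1 q.1 p.2 q.2 : Matrix (ι × α) (κ × β) R) *ᵥ (fun q => v q.1 * x q.2) =
      fun p => ((∑ k, v k • B p.1 k) *ᵥ x) p.2 := by
  ext ⟨i, a⟩
  simp only [mulVec, dotProduct, Fintype.sum_prod_type, Matrix.sum_apply, Matrix.smul_apply,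
    smul_eq_mul, Finset.sum_mul]
  rw [Finset.sum_comm]
  exact Finset.sum_congr rfl fun k _ => Finset.sum_congr rfl fun b _ => by ring

end BlockKronecker

section CompanionPencil

variable {n : ℕ} (A20 A11 A02 A10 A01 A00 : Matrix (Fin n) (Fin n) ℂ) (l m : ℂ)

noncomputable def companionBlocks (i k : Fin 3) : Matrix (Fin n) (Fin n) ℂ :=
  l • ![![A20, A11, 0], ![0, 0, 0], ![0, 0, 1]] i k + m • ![![0, A02, 0], ![0, 0, 1], ![0, 0, 0]] i k
    + ![![A10, A01, A00], ![0, -1, 0], ![-1, 0, 0]] i k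

theorem companionC_eq_blockwise :
    companionC A20 A11 A02 A10 A01 A00 l m =
      fun p q => companionBlocks A20 A11 A02 A10 A01 A00 l m p.1 q.1 p.2 q.2 :=
  rfl

theorem sum_smul_companionBlocks :
    (fun i => ∑ k, ![l, m, 1] k • companionBlocks A20 A11 A02 A10 A01 A00 l m i k) =
      ![quadQ A20 A11 A02 A10 A01 A00 l m, 0, 0] := by
  ext1 i
  fin_cases i
  · simp only [companionBlocks, quadQ, Fin.sum_univ_three, Fin.zero_eta, Fin.isValue, cons_val',
      cons_val_fin_one, cons_val_zero, cons_val_one, cons_val, smul_add, smul_zero, one_smul,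
      add_zero, zero_add]
    module
  all_goals simp [companionBlocks, Fin.sum_univ_three]

theorem companionC_mulVec_kronecker (x : Fin n → ℂ) :
    companionC A20 A11 A02 A10 A01 A00 l m *ᵥ (fun p => ![l, m, 1] p.1 * x p.2) =
      fun p => (![quadQ A20 A11 A02 A10 A01 A00 l m, 0, 0] p.1 *ᵥ x) p.2 := by
  rw [companionC_eq_blockwise, mulVec_blockwise_kronecker, ← sum_smul_companionBlocks]

end CompanionPencil

theorem companion_pencil_eigen_iff_general {n : ℕ}
    (A20 A11 A02 A10 A01 A00 : Matrix (Fin n) (Fin n) ℂ)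
    (l m : ℂ) (x : Fin n → ℂ) :
    (quadQ A20 A11 A02 A10 A01 A00 l m).mulVec x = 0 ↔
      (companionC A20 A11 A02 A10 A01 A00 l m).mulVec
        (fun p => ![l, m, 1] p.1 * x p.2) = 0 := by
  rw [companionC_mulVec_kronecker, funext_iff, funext_iff, Prod.forall, Fin.forall_fin_succ]
  simp

theorem companion_pencil_eigen_iff {n : ℕ}
    (A20 A11 A02 A10 A01 A00 : Matrix (Fin n) (Fin n) ℂ)
    (l m : ℂ) (x : Fin n → ℂ) (hx : x ≠ 0) :
    (quadQ A20 A11 A02 A10 A01 A00 l m).mulVec x = 0 ↔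
      (companionC A20 A11 A02 A10 A01 A00 l m).mulVec
        (fun p => ![l, m, 1] p.1 * x p.2) = 0 :=
  companion_pencil_eigen_iff_general A20 A11 A02 A10 A01 A00 l m x
end

section
/- Let Q(λ,μ) be a quadratic two-parameter matrix polynomial and Q_N(λ,μ) the corresponding polynomial in Newton basis with the same coefficients. Let S ∈ ℂ³ˣ³ be invertible with S·(λ,μ,1)ᵀ = (λ−α₁, μ−β₁, 1)ᵀ. Then the map f : 𝕃(Q) → 𝒩(Q_N) given by L(λ,μ) ↦ L(λ,μ)·(S⁻¹ ⊗ Iₙ) is a well-defined linear isomorphism of vector spaces, and it preserves ansatz vectors: if L(λ,μ)(Λ⊗Iₙ) = v ⊗ Q(λ,μ) then f(L)(λ,μ)(N⊗Iₙ) = v ⊗ Q(λ,μ). -/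
/-! Since `S Λ = N`, the Kronecker identity `(S⁻¹ ⊗ Iₙ)(N ⊗ Iₙ) = S⁻¹ N ⊗ Iₙ = Λ ⊗ Iₙ` gives
`L (S⁻¹ ⊗ Iₙ) (N ⊗ Iₙ) = L (Λ ⊗ Iₙ)`, so both ansatz equations are the same equation.
Right multiplication by the invertible matrix `S⁻¹ ⊗ Iₙ` is linear and bijective. -/

open Matrix

/-- Λ ⊗ Iₙ. -/
noncomputable def lamKronI {n : ℕ} (l m : ℂ) : Matrix (Fin 3 × Fin n) (Fin n) ℂ :=
  fun p j => ![l, m, 1] p.1 * (1 : Matrix (Fin n) (Fin n) ℂ) p.2 j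

/-- N ⊗ Iₙ. -/
noncomputable def newtonKronI {n : ℕ} (α1 β1 : ℂ) (l m : ℂ) :
    Matrix (Fin 3 × Fin n) (Fin n) ℂ :=
  fun p j => ![l - α1, m - β1, 1] p.1 * (1 : Matrix (Fin n) (Fin n) ℂ) p.2 j

/-- v ⊗ Q. -/
noncomputable def vecKron {n : ℕ} (v : Fin 3 → ℂ) (Q : Matrix (Fin n) (Fin n) ℂ) :
    Matrix (Fin 3 × Fin n) (Fin n) ℂ :=
  fun p j => v p.1 * Q p.2 j

/-- S ⊗ Iₙ. -/
noncomputable def matKronI {n : ℕ} (S : Matrix (Fin 3) (Fin 3) ℂ) :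
    Matrix (Fin 3 × Fin n) (Fin 3 × Fin n) ℂ :=
  fun p q => S p.1 q.1 * (1 : Matrix (Fin n) (Fin n) ℂ) p.2 q.2

open scoped Kronecker

section KroneckerIdentity

variable {n : ℕ}

noncomputable def vecKronI (w : Fin 3 → ℂ) : Matrix (Fin 3 × Fin n) (Fin n) ℂ :=
  fun p j => w p.1 * (1 : Matrix (Fin n) (Fin n) ℂ) p.2 j

theorem matKronI_eq_kronecker (A : Matrix (Fin 3) (Fin 3) ℂ) :
    matKronI (n := n) A = A ⊗ₖ 1 := rfl

theorem matKronI_mul (A B : Matrix (Fin 3) (Fin 3) ℂ) :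
    matKronI (n := n) (A * B) = matKronI A * matKronI B := by
  simp only [matKronI_eq_kronecker, ← mul_kronecker_mul, one_mul]

theorem matKronI_one : matKronI (n := n) 1 = 1 := by
  rw [matKronI_eq_kronecker, one_kronecker_one]

theorem isUnit_matKronI {A : Matrix (Fin 3) (Fin 3) ℂ} (hA : IsUnit A) :
    IsUnit (matKronI (n := n) A) := by
  obtain ⟨u, rfl⟩ := hA
  exact ⟨⟨matKronI u, matKronI ↑u⁻¹, by rw [← matKronI_mul, u.mul_inv, matKronI_one],
    by rw [← matKronI_mul, u.inv_mul, matKronI_one]⟩, rfl⟩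

theorem matKronI_mul_vecKronI (A : Matrix (Fin 3) (Fin 3) ℂ) (w : Fin 3 → ℂ) :
    matKronI (n := n) A * vecKronI w = vecKronI (A *ᵥ w) := by
  ext p j
  change ∑ k, matKronI (n := n) A p k * vecKronI w k j = _
  simp [matKronI, vecKronI, mulVec, dotProduct, Fintype.sum_prod_type, one_apply]

theorem matKronI_inv_mul_newtonKronI {S : Matrix (Fin 3) (Fin 3) ℂ} (hS : IsUnit S) {α1 β1 : ℂ}
    (hSN : ∀ l m : ℂ, S *ᵥ ![l, m, 1] = ![l - α1, m - β1, 1]) (l m : ℂ) :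
    matKronI S⁻¹ * newtonKronI (n := n) α1 β1 l m = lamKronI l m := by
  change matKronI S⁻¹ * vecKronI ![l - α1, m - β1, 1] = vecKronI ![l, m, 1]
  rw [← hSN, matKronI_mul_vecKronI, mulVec_mulVec,
    nonsing_inv_mul _ ((isUnit_iff_isUnit_det S).mp hS), one_mulVec]

theorem mul_matKronI_inv_mul_newtonKronI {S : Matrix (Fin 3) (Fin 3) ℂ} (hS : IsUnit S)
    {α1 β1 : ℂ} (hSN : ∀ l m : ℂ, S *ᵥ ![l, m, 1] = ![l - α1, m - β1, 1])
    (L : Matrix (Fin 3 × Fin n) (Fin 3 × Fin n) ℂ) (l m : ℂ) :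
    L * matKronI S⁻¹ * newtonKronI α1 β1 l m = L * lamKronI l m :=
  (Matrix.mul_assoc _ _ _).trans (congrArg (L * ·) (matKronI_inv_mul_newtonKronI hS hSN l m))

end KroneckerIdentity

/-- The map L(λ,μ) ↦ L(λ,μ)(S⁻¹ ⊗ Iₙ) is a well-defined ansatz-vector-preserving
bijective linear map from 𝕃(Q) to 𝒩(Q_N). -/
theorem iso_L_to_N {n : ℕ} (α1 β1 : ℂ)
    (A20 A11 A02 A10 A01 A00 : Matrix (Fin n) (Fin n) ℂ)
    (S : Matrix (Fin 3) (Fin 3) ℂ) (hS : IsUnit S)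
    (hSN : ∀ l m : ℂ, S.mulVec ![l, m, 1] = ![l - α1, m - β1, 1]) :
    -- the map preserves ansatz vectors (well-definedness, and injectivity/surjectivity
    -- between the two ansatz spaces follows from the ↔ together with bijectivity below)
    (∀ (L : ℂ → ℂ → Matrix (Fin 3 × Fin n) (Fin 3 × Fin n) ℂ) (v : Fin 3 → ℂ),
      (∀ l m, L l m * lamKronI l m = vecKron v (quadQ A20 A11 A02 A10 A01 A00 l m)) ↔
        (∀ l m, (L l m * matKronI S⁻¹) * newtonKronI α1 β1 l m =
          vecKron v (quadQ A20 A11 A02 A10 A01 A00 l m))) ∧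
    -- the map is ℂ-linear
    (∀ (c : ℂ) (L L' : Matrix (Fin 3 × Fin n) (Fin 3 × Fin n) ℂ),
      (c • L + L') * matKronI (n := n) S⁻¹ =
        c • (L * matKronI S⁻¹) + L' * matKronI S⁻¹) ∧
    -- the map is bijective
    Function.Bijective
      (fun L : Matrix (Fin 3 × Fin n) (Fin 3 × Fin n) ℂ => L * matKronI S⁻¹) := by
  refine ⟨fun L v => forall₂_congr fun l m => ?_, fun c L L' => ?_, ?_⟩
  · exact (mul_matKronI_inv_mul_newtonKronI hS hSN (L l m) l m).symm.congr_left
  · rw [add_mul, smul_mul]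
  · exact (isUnit_matKronI (isUnit_nonsing_inv_iff.mpr hS)).unit.mulRight.bijective
end

section
/- Let A₁, A₂, A₃ ∈ ℂ³ⁿˣ³ⁿ, v ∈ ℂ³, and let Q(λ,μ) = λ²A₂₀+λμA₁₁+μ²A₀₂+λA₁₀+μA₀₁+A₀₀ and Q_N(λ,μ) = A₂₀n₂(λ)+A₁₁n₁(λ)m₁(μ)+A₀₂m₂(μ)+A₁₀n₁(λ)+A₀₁m₁(μ)+A₀₀ share the same coefficients. Then (λA₁ + μA₂ + A₃)(Λ ⊗ Iₙ) = v ⊗ Q(λ,μ) holds identically in (λ,μ) if and only if (A₁Γ₂(λ) + A₂Γ̃₂(μ) + A₃)(N ⊗ Iₙ) = v ⊗ Q_N(λ,μ) holds identically in (λ,μ). -/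
/-!
Both identities are polynomial in `(λ, μ)` with matrix coefficients. Expanding `Λ ⊗ Iₙ`,
`Γ₂(λ) (N ⊗ Iₙ)` and `Γ̃₂(μ) (N ⊗ Iₙ)` along the block columns `eₖ ⊗ Iₙ` shows that the two
residuals have the same six coefficient matrices, once in the monomial basis
`λ², λμ, μ², λ, μ, 1` and once in the Newton basis `n₂(λ), n₁(λ)m₁(μ), m₂(μ), n₁(λ), m₁(μ), 1`.
Each residual vanishes identically iff these six coefficients vanish: in the monomial basis by
evaluation at six points, in the Newton basis after the shift `λ ↦ λ + α₁, μ ↦ μ + β₁`, which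
turns it into a triangular change of the monomial coefficients.
-/

open Matrix

noncomputable def quadQN {n : ℕ} (α1 α2 β1 β2 : ℂ)
    (A20 A11 A02 A10 A01 A00 : Matrix (Fin n) (Fin n) ℂ) (l m : ℂ) :
    Matrix (Fin n) (Fin n) ℂ :=
  ((l - α1) * (l - α2)) • A20 + ((l - α1) * (m - β1)) • A11 +
    ((m - β1) * (m - β2)) • A02 + (l - α1) • A10 + (m - β1) • A01 + A00

noncomputable def Gamma2 {n : ℕ} (α1 α2 : ℂ) (l : ℂ) :
    Matrix (Fin 3 × Fin n) (Fin 3 × Fin n) ℂ :=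
  fun p q => if p = q then ![l - α2, l - α1, l - α1] p.1 else 0

noncomputable def GammaT2 {n : ℕ} (β1 β2 : ℂ) (m : ℂ) :
    Matrix (Fin 3 × Fin n) (Fin 3 × Fin n) ℂ :=
  fun p q => if p = q then ![m - β1, m - β2, m - β1] p.1 else 0

section

variable {K M : Type*} [Field K] [NeZero (2 : K)] [AddCommGroup M] [Module K M]
  {e20 e11 e02 e10 e01 e00 : M}

theorem forall_quadratic_eq_zero_iff :
    (∀ l m : K, l ^ 2 • e20 + (l * m) • e11 + m ^ 2 • e02 + l • e10 + m • e01 + e00 = 0) ↔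
      e20 = 0 ∧ e11 = 0 ∧ e02 = 0 ∧ e10 = 0 ∧ e01 = 0 ∧ e00 = 0 := by
  refine ⟨fun h => ?_, fun ⟨h20, h11, h02, h10, h01, h00⟩ l m => by simp [*]⟩
  have h00 : e00 = 0 := by simpa using h 0 0
  have at_1_0 : e20 + e10 = 0 := by simpa [h00] using h 1 0
  have at_neg1_0 : e20 - e10 = 0 := by simpa [h00, sub_eq_add_neg] using h (-1) 0
  have at_0_1 : e02 + e01 = 0 := by simpa [h00] using h 0 1
  have at_0_neg1 : e02 - e01 = 0 := by simpa [h00, sub_eq_add_neg] using h 0 (-1)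
  have at_1_1 : e20 + e11 + e02 + e10 + e01 = 0 := by simpa [h00] using h 1 1
  have cancel_two : ∀ x : M, (2 : K) • x = 0 → x = 0 := fun x hx =>
    (smul_eq_zero.mp hx).resolve_left two_ne_zero
  have h20 : e20 = 0 :=
    cancel_two _ (by linear_combination (norm := module) at_1_0 + at_neg1_0)
  have h02 : e02 = 0 :=
    cancel_two _ (by linear_combination (norm := module) at_0_1 + at_0_neg1)
  refine ⟨h20, ?_, h02, ?_, ?_, h00⟩
  · linear_combination (norm := module) at_1_1 - at_1_0 - at_0_1
  · simpa [h20] using at_1_0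
  · simpa [h02] using at_0_1

theorem forall_newton_quadratic_eq_zero_iff (α1 α2 β1 β2 : K) :
    (∀ l m : K, ((l - α1) * (l - α2)) • e20 + ((l - α1) * (m - β1)) • e11 +
        ((m - β1) * (m - β2)) • e02 + (l - α1) • e10 + (m - β1) • e01 + e00 = 0) ↔
      e20 = 0 ∧ e11 = 0 ∧ e02 = 0 ∧ e10 = 0 ∧ e01 = 0 ∧ e00 = 0 := by
  have eq_shifted_monomial : ∀ l m : K,
      ((l - α1) * (l - α2)) • e20 + ((l - α1) * (m - β1)) • e11 +
        ((m - β1) * (m - β2)) • e02 + (l - α1) • e10 + (m - β1) • e01 + e00 =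
      (l - α1) ^ 2 • e20 + ((l - α1) * (m - β1)) • e11 + (m - β1) ^ 2 • e02 +
        (l - α1) • (e10 + (α1 - α2) • e20) + (m - β1) • (e01 + (β1 - β2) • e02) + e00 := by
    intro l m; module
  simp only [eq_shifted_monomial]
  refine (Iff.trans ⟨fun h l m => by simpa using h (l + α1) (m + β1), fun h l m => h _ _⟩
    forall_quadratic_eq_zero_iff).trans ?_
  constructor <;> rintro ⟨h20, h11, h02, h10, h01, h00⟩ <;> simp_all

end

/- In `monomial_ansatz_iff_newton_ansatz` the products `_ * lamKronI l m` and
`_ * newtonKronI α1 β1 l m` elaborate while the dimension `n` is still a metavariable, so the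
default `HMul` instance of `CStarMatrix` is chosen; it is definitionally the matrix product.
The lemmas below fix `(n := n)` to get `Matrix`'s instance. -/
theorem cstarMatrix_hMul_eq_mul {l m k A : Type*} [Fintype m] [Mul A] [AddCommMonoid A]
    (M : Matrix l m A) (N : Matrix m k A) :
    @HMul.hMul (Matrix l m A) (Matrix m k A) (Matrix l k A)
      CStarMatrix.instHMulOfFintypeOfMulOfAddCommMonoid M N = (M * N : Matrix l k A) :=
  rfl

noncomputable def unitKronI (n : ℕ) (k : Fin 3) : Matrix (Fin 3 × Fin n) (Fin n) ℂ :=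
  vecKron (Pi.single k 1) 1

section

variable {n : ℕ}

theorem vecKron_add (v : Fin 3 → ℂ) (P Q : Matrix (Fin n) (Fin n) ℂ) :
    vecKron v (P + Q) = vecKron v P + vecKron v Q := by
  ext p j; simp [vecKron, mul_add]

theorem vecKron_smul (v : Fin 3 → ℂ) (c : ℂ) (Q : Matrix (Fin n) (Fin n) ℂ) :
    vecKron v (c • Q) = c • vecKron v Q := by
  ext p j; simp [vecKron, mul_left_comm]

theorem lamKronI_eq (l m : ℂ) :
    lamKronI l m = l • unitKronI n 0 + m • unitKronI n 1 + unitKronI n 2 := by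
  ext ⟨i, k⟩ j; fin_cases i <;> simp [lamKronI, unitKronI, vecKron]

theorem newtonKronI_eq (α1 β1 l m : ℂ) :
    newtonKronI α1 β1 l m =
      (l - α1) • unitKronI n 0 + (m - β1) • unitKronI n 1 + unitKronI n 2 := by
  ext ⟨i, k⟩ j; fin_cases i <;> simp [newtonKronI, unitKronI, vecKron]

theorem Gamma2_eq_diagonal (α1 α2 l : ℂ) :
    Gamma2 (n := n) α1 α2 l = diagonal fun p => ![l - α2, l - α1, l - α1] p.1 := by
  ext p q; simp [Gamma2, diagonal_apply]

theorem GammaT2_eq_diagonal (β1 β2 m : ℂ) :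
    GammaT2 (n := n) β1 β2 m = diagonal fun p => ![m - β1, m - β2, m - β1] p.1 := by
  ext p q; simp [GammaT2, diagonal_apply]

theorem diagonal_mul_unitKronI (d : Fin 3 → ℂ) (k : Fin 3) :
    diagonal (fun p : Fin 3 × Fin n => d p.1) * unitKronI n k = d k • unitKronI n k := by
  ext p j; by_cases h : p.1 = k <;> simp [unitKronI, vecKron, h]

theorem Gamma2_mul_newtonKronI (α1 α2 β1 l m : ℂ) :
    Gamma2 (n := n) α1 α2 l * newtonKronI (n := n) α1 β1 l m =
      ((l - α1) * (l - α2)) • unitKronI n 0 + ((l - α1) * (m - β1)) • unitKronI n 1 +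
        (l - α1) • unitKronI n 2 := by
  simp only [Gamma2_eq_diagonal, newtonKronI_eq, Matrix.mul_add, Matrix.mul_smul,
    diagonal_mul_unitKronI, cons_val_zero, cons_val_one, cons_val_two, head_cons, tail_cons]
  module

theorem GammaT2_mul_newtonKronI (α1 β1 β2 l m : ℂ) :
    GammaT2 (n := n) β1 β2 m * newtonKronI (n := n) α1 β1 l m =
      ((m - β1) * (l - α1)) • unitKronI n 0 + ((m - β1) * (m - β2)) • unitKronI n 1 +
        (m - β1) • unitKronI n 2 := by
  simp only [GammaT2_eq_diagonal, newtonKronI_eq, Matrix.mul_add, Matrix.mul_smul,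
    diagonal_mul_unitKronI, cons_val_zero, cons_val_one, cons_val_two, head_cons, tail_cons]
  module

variable (A1 A2 A3 : Matrix (Fin 3 × Fin n) (Fin 3 × Fin n) ℂ) (v : Fin 3 → ℂ)
  (A20 A11 A02 A10 A01 A00 : Matrix (Fin n) (Fin n) ℂ)

theorem monomial_ansatz_sub_eq (l m : ℂ) :
    (l • A1 + m • A2 + A3) * lamKronI (n := n) l m -
        vecKron v (quadQ A20 A11 A02 A10 A01 A00 l m) =
      l ^ 2 • (A1 * unitKronI n 0 - vecKron v A20) +
      (l * m) • (A1 * unitKronI n 1 + A2 * unitKronI n 0 - vecKron v A11) +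
      m ^ 2 • (A2 * unitKronI n 1 - vecKron v A02) +
      l • (A1 * unitKronI n 2 + A3 * unitKronI n 0 - vecKron v A10) +
      m • (A2 * unitKronI n 2 + A3 * unitKronI n 1 - vecKron v A01) +
      (A3 * unitKronI n 2 - vecKron v A00) := by
  simp only [lamKronI_eq, quadQ, vecKron_add, vecKron_smul, Matrix.add_mul, Matrix.mul_add,
    Matrix.smul_mul, Matrix.mul_smul]
  module

theorem newton_ansatz_sub_eq (α1 α2 β1 β2 l m : ℂ) :
    (A1 * Gamma2 α1 α2 l + A2 * GammaT2 β1 β2 m + A3) * newtonKronI (n := n) α1 β1 l m -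
        vecKron v (quadQN α1 α2 β1 β2 A20 A11 A02 A10 A01 A00 l m) =
      ((l - α1) * (l - α2)) • (A1 * unitKronI n 0 - vecKron v A20) +
      ((l - α1) * (m - β1)) • (A1 * unitKronI n 1 + A2 * unitKronI n 0 - vecKron v A11) +
      ((m - β1) * (m - β2)) • (A2 * unitKronI n 1 - vecKron v A02) +
      (l - α1) • (A1 * unitKronI n 2 + A3 * unitKronI n 0 - vecKron v A10) +
      (m - β1) • (A2 * unitKronI n 2 + A3 * unitKronI n 1 - vecKron v A01) +
      (A3 * unitKronI n 2 - vecKron v A00) := by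
  simp only [Matrix.add_mul, Matrix.mul_assoc, Gamma2_mul_newtonKronI, GammaT2_mul_newtonKronI]
  simp only [newtonKronI_eq, quadQN, vecKron_add, vecKron_smul, Matrix.mul_add, Matrix.mul_smul]
  module

end

theorem monomial_ansatz_iff_newton_ansatz {n : ℕ} (α1 α2 β1 β2 : ℂ)
    (A1 A2 A3 : Matrix (Fin 3 × Fin n) (Fin 3 × Fin n) ℂ) (v : Fin 3 → ℂ)
    (A20 A11 A02 A10 A01 A00 : Matrix (Fin n) (Fin n) ℂ) :
    (∀ l m : ℂ, (l • A1 + m • A2 + A3) * lamKronI l m =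
        vecKron v (quadQ A20 A11 A02 A10 A01 A00 l m)) ↔
      (∀ l m : ℂ, (A1 * Gamma2 α1 α2 l + A2 * GammaT2 β1 β2 m + A3) *
          newtonKronI α1 β1 l m =
        vecKron v (quadQN α1 α2 β1 β2 A20 A11 A02 A10 A01 A00 l m)) := by
  simp only [cstarMatrix_hMul_eq_mul, ← sub_eq_zero (b := vecKron v _), monomial_ansatz_sub_eq,
    newton_ansatz_sub_eq, forall_quadratic_eq_zero_iff, forall_newton_quadratic_eq_zero_iff]
end

section
/- Let Q_N(λ,μ) = A₂₀n₂(λ)+A₁₁n₁(λ)m₁(μ)+A₀₂m₂(μ)+A₁₀n₁(λ)+A₀₁m₁(μ)+A₀₀ be an n×n quadratic two-parameter matrix polynomial in Newton basis. Let L_N(λ,μ) ∈ 𝒩(Q_N) be the pencil with ansatz vector e₁ constructed with blocks Y₂₁ = Y₃₁ = 0 and Z-blocks satisfying det [[Z₂₁, Z₂₂],[Z₃₁, Z₃₂]] ≠ 0 (as in the paper's Theorem on linearizations). Then there exist matrix polynomials Ẽ(λ,μ) and F̃(λ,μ) with constant nonzero determinants (unimodular) such that F̃(λ,μ)·L_N(λ,μ)·Ẽ(λ,μ)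 = diag(Q_N(λ,μ), I₂ₙ); consequently det L_N(λ,μ) = γ·det Q_N(λ,μ) for some nonzero constant γ ∈ ℂ, i.e., L_N is a linearization of Q_N. -/
/-!
Right multiplication by `Ẽ` collects the columns of `L_N` so that
`L_N Ẽ = [[Q_N, B], [0, Z]]`, where `B(λ, μ)` is a block row and
`Z = [[Z₂₁, Z₂₂], [Z₃₁, Z₃₂]]` is constant. As `det Z ≠ 0`, the row operation
`F̃ = [[I, -B Z⁻¹], [0, Z⁻¹]]` turns this into `diag(Q_N, I₂ₙ)` and has determinant `(det Z)⁻¹`.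
`Ẽ` is a unitriangular shear times a constant block permutation, so its determinant is
constant as well, and comparing determinants gives `det L_N = γ det Q_N`.
-/

open Matrix

/-- Assemble a 3×3 block matrix of n×n blocks into a 3n×3n matrix. -/
noncomputable def blk {n : ℕ} (B : Fin 3 → Fin 3 → Matrix (Fin n) (Fin n) ℂ) :
    Matrix (Fin 3 × Fin n) (Fin 3 × Fin n) ℂ :=
  fun p q => B p.1 q.1 p.2 q.2

/-- diag(Q, I₂ₙ) as a 3n×3n matrix. -/
noncomputable def diagQI {n : ℕ} (Q : Matrix (Fin n) (Fin n) ℂ) :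
    Matrix (Fin 3 × Fin n) (Fin 3 × Fin n) ℂ :=
  fun p q => if p.1 = 0 then (if q.1 = 0 then Q p.2 q.2 else 0)
    else (if p = q then 1 else 0)

/-- The pencil L_N(λ,μ) = A₁Γ₂(λ) + A₂Γ̃₂(μ) + A₃ with ansatz vector e₁,
with Y₂₁ = Y₃₁ = 0 (blocks as in the paper's Theorem). -/
noncomputable def LN {n : ℕ} (α1 α2 β1 β2 : ℂ)
    (A20 A11 A02 A10 A01 A00 Y11 Z11 Z21 Z31 Z12 Z22 Z32 : Matrix (Fin n) (Fin n) ℂ)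
    (l m : ℂ) : Matrix (Fin 3 × Fin n) (Fin 3 × Fin n) ℂ :=
  blk ![![A20, A11 - Y11, A10 - Z11], ![0, 0, -Z21], ![0, 0, -Z31]] * Gamma2 α1 α2 l +
  blk ![![Y11, A02, A01 - Z12], ![0, 0, -Z22], ![0, 0, -Z32]] * GammaT2 β1 β2 m +
  blk ![![Z11, Z12, A00], ![Z21, Z22, 0], ![Z31, Z32, 0]]

section BlockElimination

variable {R m k : Type*} [CommRing R] [Fintype m] [Fintype k] [DecidableEq m] [DecidableEq k]

noncomputable def blockRowReducer (B : Matrix m k R) (Z : Matrix k k R) : Matrix (m ⊕ k) (m ⊕ k) R :=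
  fromBlocks 1 (-(B * Z⁻¹)) 0 Z⁻¹

lemma blockRowReducer_mul (Q : Matrix m m R) (B : Matrix m k R) {Z : Matrix k k R}
    (hZ : IsUnit Z.det) :
    blockRowReducer B Z * fromBlocks Q B 0 Z = fromBlocks Q 0 0 1 := by
  simp [blockRowReducer, fromBlocks_multiply, Matrix.mul_assoc, nonsing_inv_mul _ hZ]

lemma det_blockRowReducer {K : Type*} [Field K] (B : Matrix m k K) (Z : Matrix k k K) :
    (blockRowReducer B Z).det = Z.det⁻¹ := by
  rw [blockRowReducer, det_fromBlocks_zero₂₁, det_one, one_mul, det_nonsing_inv,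
    Ring.inverse_eq_inv']

end BlockElimination

lemma det_eq_inv_mul_det_of_mul_mul_eq {K ι : Type*} [Field K] [Fintype ι] [DecidableEq ι]
    {F L E D : Matrix ι ι K} {a b : K} (h : F * L * E = D) (hF : F.det = a) (hE : E.det = b)
    (ha : a ≠ 0) (hb : b ≠ 0) :
    L.det = (a * b)⁻¹ * D.det := by
  rw [← h, det_mul, det_mul, hF, hE]
  field_simp

section BlockCalculus

variable {n : ℕ}

lemma blk_apply (B : Fin 3 → Fin 3 → Matrix (Fin n) (Fin n) ℂ) (p q : Fin 3 × Fin n) :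
    blk B p q = B p.1 q.1 p.2 q.2 := rfl

lemma blk_add (B C : Fin 3 → Fin 3 → Matrix (Fin n) (Fin n) ℂ) :
    blk B + blk C = blk (B + C) := rfl

lemma blk_mul (B C : Fin 3 → Fin 3 → Matrix (Fin n) (Fin n) ℂ) :
    blk B * blk C = blk (fun i k => B i 0 * C 0 k + B i 1 * C 1 k + B i 2 * C 2 k) := by
  ext ⟨i, a⟩ ⟨k, b⟩
  simp [blk_apply, mul_apply, Fintype.sum_prod_type, Fin.sum_univ_three]

def finThreeProdEquiv (n : ℕ) : Fin 3 × Fin n ≃ Fin n ⊕ (Fin n ⊕ Fin n) where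
  toFun
    | (0, a) => Sum.inl a
    | (1, a) => Sum.inr (Sum.inl a)
    | (2, a) => Sum.inr (Sum.inr a)
  invFun := Sum.elim (fun a => (0, a)) (Sum.elim (fun a => (1, a)) (fun a => (2, a)))
  left_inv := by rintro ⟨i, a⟩; fin_cases i <;> rfl
  right_inv := by rintro (a | a | a) <;> rfl

lemma blk_eq_submatrix (B : Fin 3 → Fin 3 → Matrix (Fin n) (Fin n) ℂ) :
    blk B = (fromBlocks (B 0 0) (fromCols (B 0 1) (B 0 2)) (fromRows (B 1 0) (B 2 0))
      (fromBlocks (B 1 1) (B 1 2) (B 2 1) (B 2 2))).submatrix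
        (finThreeProdEquiv n) (finThreeProdEquiv n) := by
  ext ⟨i, a⟩ ⟨j, b⟩
  fin_cases i <;> fin_cases j <;> rfl

lemma det_blk_of_lower_left_eq_zero (B : Fin 3 → Fin 3 → Matrix (Fin n) (Fin n) ℂ)
    (h10 : B 1 0 = 0) (h20 : B 2 0 = 0) :
    (blk B).det = (B 0 0).det * (fromBlocks (B 1 1) (B 1 2) (B 2 1) (B 2 2)).det := by
  rw [blk_eq_submatrix, det_submatrix_equiv_self, h10, h20, fromRows_zero,
    det_fromBlocks_zero₂₁]

lemma diagQI_eq_submatrix (Q : Matrix (Fin n) (Fin n) ℂ) :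
    diagQI Q = (fromBlocks Q 0 0 1).submatrix (finThreeProdEquiv n) (finThreeProdEquiv n) := by
  ext ⟨i, a⟩ ⟨j, b⟩
  fin_cases i <;> fin_cases j <;> simp [diagQI, finThreeProdEquiv, one_apply]

lemma det_diagQI (Q : Matrix (Fin n) (Fin n) ℂ) : (diagQI Q).det = Q.det := by
  rw [diagQI_eq_submatrix, det_submatrix_equiv_self, det_fromBlocks_zero₂₁, det_one, mul_one]

/- The `Matrix.cons_val` simproc misfires on `![…] 2` applied to further arguments;
hence `-Matrix.cons_val, Matrix.cons_val_two` in the block computations below. -/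

lemma Gamma2_eq_blk (α1 α2 l : ℂ) : (Gamma2 α1 α2 l : Matrix (Fin 3 × Fin n) _ ℂ) =
    blk ![![(l - α2) • 1, 0, 0], ![0, (l - α1) • 1, 0], ![0, 0, (l - α1) • 1]] := by
  ext ⟨i, a⟩ ⟨j, b⟩
  fin_cases i <;> fin_cases j <;>
    simp [Gamma2, blk_apply, one_apply, -Matrix.cons_val, Matrix.cons_val_two]

lemma GammaT2_eq_blk (β1 β2 m : ℂ) : (GammaT2 β1 β2 m : Matrix (Fin 3 × Fin n) _ ℂ) =
    blk ![![(m - β1) • 1, 0, 0], ![0, (m - β2) • 1, 0], ![0, 0, (m - β1) • 1]] := by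
  ext ⟨i, a⟩ ⟨j, b⟩
  fin_cases i <;> fin_cases j <;>
    simp [GammaT2, blk_apply, one_apply, -Matrix.cons_val, Matrix.cons_val_two]

end BlockCalculus

section Pencil

variable {n : ℕ}

/-- The paper's `Ẽ(λ, μ)`, with `n₁(λ) = λ - α₁` and `m₁(μ) = μ - β₁`. -/
noncomputable def Etilde (α1 β1 l m : ℂ) : Matrix (Fin 3 × Fin n) (Fin 3 × Fin n) ℂ :=
  blk ![![(l - α1) • 1, 1, 0], ![(m - β1) • 1, 0, 1], ![1, 0, 0]]

lemma LN_mul_Etilde (α1 α2 β1 β2 : ℂ)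
    (A20 A11 A02 A10 A01 A00 Y11 Z11 Z21 Z31 Z12 Z22 Z32 : Matrix (Fin n) (Fin n) ℂ)
    (l m : ℂ) :
    LN α1 α2 β1 β2 A20 A11 A02 A10 A01 A00 Y11 Z11 Z21 Z31 Z12 Z22 Z32 l m * Etilde α1 β1 l m =
      blk ![![quadQN α1 α2 β1 β2 A20 A11 A02 A10 A01 A00 l m,
              (l - α2) • A20 + (m - β1) • Y11 + Z11,
              (l - α1) • (A11 - Y11) + (m - β2) • A02 + Z12],
            ![0, Z21, Z22],
            ![0, Z31, Z32]] := by
  rw [LN, Etilde, Gamma2_eq_blk, GammaT2_eq_blk, blk_mul, blk_mul, blk_add, blk_add, blk_mul]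
  congr 1
  ext i j : 2
  fin_cases i <;> fin_cases j <;>
    simp [quadQN, -Matrix.cons_val, Matrix.cons_val_two] <;> module

noncomputable def blockCycle : Matrix (Fin 3 × Fin n) (Fin 3 × Fin n) ℂ :=
  blk ![![0, 1, 0], ![0, 0, 1], ![1, 0, 0]]

lemma Etilde_eq_mul (α1 β1 l m : ℂ) :
    (Etilde α1 β1 l m : Matrix (Fin 3 × Fin n) _ ℂ) =
      blk ![![1, 0, (l - α1) • 1], ![0, 1, (m - β1) • 1], ![0, 0, 1]] * blockCycle := by
  rw [Etilde, blockCycle, blk_mul]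
  congr 1
  ext i j : 2
  fin_cases i <;> fin_cases j <;> simp [-Matrix.cons_val, Matrix.cons_val_two]

lemma det_blockCycle_ne_zero : (blockCycle (n := n)).det ≠ 0 := by
  refine det_ne_zero_of_right_inverse (B := blk ![![0, 0, 1], ![1, 0, 0], ![0, 1, 0]]) ?_
  rw [blockCycle, blk_mul]
  ext ⟨i, a⟩ ⟨j, b⟩
  fin_cases i <;> fin_cases j <;>
    simp [blk_apply, one_apply, -Matrix.cons_val, Matrix.cons_val_two]

lemma det_Etilde (α1 β1 l m : ℂ) :
    (Etilde (n := n) α1 β1 l m).det = (blockCycle (n := n)).det := by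
  rw [Etilde_eq_mul, det_mul, det_blk_of_lower_left_eq_zero _ rfl rfl]
  simp [-Matrix.cons_val, Matrix.cons_val_two]

end Pencil

theorem LN_is_linearization {n : ℕ} (α1 α2 β1 β2 : ℂ)
    (A20 A11 A02 A10 A01 A00 Y11 Z11 Z21 Z31 Z12 Z22 Z32 : Matrix (Fin n) (Fin n) ℂ)
    (hZ : (Matrix.fromBlocks Z21 Z22 Z31 Z32).det ≠ 0) :
    ∃ E F : ℂ → ℂ → Matrix (Fin 3 × Fin n) (Fin 3 × Fin n) ℂ,
      (∃ c : ℂ, c ≠ 0 ∧ ∀ l m : ℂ, (E l m).det = c) ∧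
      (∃ c : ℂ, c ≠ 0 ∧ ∀ l m : ℂ, (F l m).det = c) ∧
      (∀ l m : ℂ,
        F l m * LN α1 α2 β1 β2 A20 A11 A02 A10 A01 A00 Y11 Z11 Z21 Z31 Z12 Z22 Z32 l m *
            E l m =
          diagQI (quadQN α1 α2 β1 β2 A20 A11 A02 A10 A01 A00 l m)) ∧
      (∃ γ : ℂ, γ ≠ 0 ∧ ∀ l m : ℂ,
        (LN α1 α2 β1 β2 A20 A11 A02 A10 A01 A00 Y11 Z11 Z21 Z31 Z12 Z22 Z32 l m).det =
          γ * (quadQN α1 α2 β1 β2 A20 A11 A02 A10 A01 A00 l m).det) := by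
  let B (l m : ℂ) : Matrix (Fin n) (Fin n ⊕ Fin n) ℂ :=
    fromCols ((l - α2) • A20 + (m - β1) • Y11 + Z11)
      ((l - α1) • (A11 - Y11) + (m - β2) • A02 + Z12)
  let F (l m : ℂ) := (blockRowReducer (B l m) (fromBlocks Z21 Z22 Z31 Z32)).submatrix
    (finThreeProdEquiv n) (finThreeProdEquiv n)
  have hF (l m : ℂ) : (F l m).det = (fromBlocks Z21 Z22 Z31 Z32).det⁻¹ := by
    rw [det_submatrix_equiv_self, det_blockRowReducer]
  have hFLE (l m : ℂ) :
      F l m * LN α1 α2 β1 β2 A20 A11 A02 A10 A01 A00 Y11 Z11 Z21 Z31 Z12 Z22 Z32 l m *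
        Etilde α1 β1 l m = diagQI (quadQN α1 α2 β1 β2 A20 A11 A02 A10 A01 A00 l m) := by
    rw [mul_assoc, LN_mul_Etilde, blk_eq_submatrix, diagQI_eq_submatrix, submatrix_mul_equiv]
    congr 1
    simpa [-Matrix.cons_val, Matrix.cons_val_two] using blockRowReducer_mul _ (B l m) hZ.isUnit
  have hcF : (fromBlocks Z21 Z22 Z31 Z32).det⁻¹ ≠ 0 := inv_ne_zero hZ
  have hcE : (blockCycle (n := n)).det ≠ 0 := det_blockCycle_ne_zero
  refine ⟨Etilde α1 β1, F, ⟨_, hcE, det_Etilde α1 β1⟩, ⟨_, hcF, hF⟩, hFLE,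
    _, inv_ne_zero (mul_ne_zero hcF hcE), fun l m => ?_⟩
  rw [det_eq_inv_mul_det_of_mul_mul_eq (hFLE l m) (hF l m) (det_Etilde α1 β1 l m) hcF hcE,
    det_diagQI]
end

section
/- Let f, g ∈ ℂ[x,y] be nonzero polynomials. If the set of common zeros {(x,y) ∈ ℂ×ℂ : f(x,y) = 0 ∧ g(x,y) = 0} is finite, then its cardinality is at most deg(f)·deg(g). -/
/-!
Choose `t` so that `p ↦ p.1 - t * p.2` is injective on the finite common zero set and shear `f`
and `g` by `x ↦ x + t * y`; the common zeros of the sheared pair `F, G` then have pairwise distinct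
`x`-coordinates. Viewing `F, G` in `ℂ[x][y]`, their resultant with respect to `y` is a polynomial
`R(x)` vanishing at the `x`-coordinate of every common zero. It is nonzero: otherwise `F` and `G`
would have a common zero above every `x` at which both leading coefficients survive. Giving the
coefficient of `y ^ j` in `F` the weight `deg_x + j ≤ deg f` (and likewise for `G`), every term of
the Sylvester determinant has `x`-degree at most `m * deg g + n * deg f - m * n ≤ deg f * deg g`,
where `m, n ≤ deg f, deg g` are the `y`-degrees. Hence the number of common zeros is at most the
number of roots of `R`, which is at most `deg f * deg g`.
-/

section

open Polynomial
open scoped Polynomial.Bivariate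

theorem Matrix.natDegree_det_le_sum_sub_sum {ι R : Type*} [Fintype ι] [DecidableEq ι]
    [CommRing R] (M : Matrix ι ι R[X]) (a b : ι → ℕ)
    (h : ∀ i j, M i j ≠ 0 → (M i j).natDegree + a i ≤ b j) :
    M.det.natDegree ≤ ∑ j, b j - ∑ i, a i := by
  rw [Matrix.det_apply']
  refine natDegree_sum_le_of_forall_le _ _ fun σ _ => ?_
  refine natDegree_mul_le.trans ?_
  rw [natDegree_intCast, zero_add]
  by_cases hσ : ∀ j, M (σ j) j ≠ 0
  · have hsum : ∑ j, ((M (σ j) j).natDegree + a (σ j)) ≤ ∑ j, b j :=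
      Finset.sum_le_sum fun j _ => h _ _ (hσ j)
    rw [Finset.sum_add_distrib, Equiv.sum_comp σ a] at hsum
    exact (natDegree_prod_le _ _).trans (Nat.le_sub_of_add_le hsum)
  · obtain ⟨j, hj⟩ := not_forall_not.mp hσ
    have hzero : ∏ i, M (σ i) i = 0 := Finset.prod_eq_zero (Finset.mem_univ j) hj
    rw [hzero, natDegree_zero]
    exact Nat.zero_le _

theorem Polynomial.natDegree_resultant_le {R : Type*} [CommRing R] {F G : R[X][Y]} {D E : ℕ}
    (m n : ℕ) (hF : ∀ j, F.coeff j ≠ 0 → (F.coeff j).natDegree + j ≤ D)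
    (hG : ∀ j, G.coeff j ≠ 0 → (G.coeff j).natDegree + j ≤ E) :
    (resultant F G m n).natDegree ≤ m * E + n * D - m * n := by
  have hentry : ∀ i j, sylvester F G m n i j ≠ 0 →
      (sylvester F G m n i j).natDegree + i ≤ j.addCases (fun k => E + k) (fun k => D + k) := by
    intro i j hne
    induction j using Fin.addCases with
    | left k =>
      simp only [sylvester, Matrix.of_apply, Fin.addCases_left, Set.mem_Icc] at hne ⊢
      split_ifs at hne ⊢
      · have := hG _ hne
        omega
      · exact absurd rfl hne
    | right k =>
      simp only [sylvester, Matrix.of_apply, Fin.addCases_right, Set.mem_Icc] at hne ⊢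
      split_ifs at hne ⊢
      · have := hF _ hne
        omega
      · exact absurd rfl hne
  refine (Matrix.natDegree_det_le_sum_sub_sum _ (fun i : Fin (m + n) => (i : ℕ)) _ hentry).trans
    (le_of_eq ?_)
  simp only [Fin.sum_univ_add, Fin.addCases_left, Fin.addCases_right, Fin.val_castAdd,
    Fin.val_natAdd, Finset.sum_add_distrib, Finset.sum_const, Finset.card_univ, Fintype.card_fin,
    smul_eq_mul]
  rw [Nat.mul_comm n m]
  omega

namespace Polynomial.Bivariate

variable {R : Type*} [CommRing R]

theorem eval_equivMvPolynomial (P : R[X][Y]) (x y : R) :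
    MvPolynomial.eval ![x, y] (equivMvPolynomial R P) = P.evalEval x y := by
  induction P using Polynomial.induction_on' with
  | add p q hp hq => simp [hp, hq]
  | monomial n p =>
    induction p using Polynomial.induction_on' with
    | add p q hp hq => simp only [map_add, evalEval_add, hp, hq]
    | monomial m a =>
      simp_rw [← C_mul_X_pow_eq_monomial]
      simp [evalEval_C]

theorem coeff_equivMvPolynomial (P : R[X][Y]) (i j : ℕ) :
    (equivMvPolynomial R P).coeff (Finsupp.single 0 i + Finsupp.single 1 j) =
      (P.coeff j).coeff i := by
  induction P using Polynomial.induction_on' with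
  | add p q hp hq => simp [hp, hq]
  | monomial n p =>
    induction p using Polynomial.induction_on' with
    | add p q hp hq => simp only [map_add, MvPolynomial.coeff_add, coeff_add, hp, hq]
    | monomial m a =>
      have hmono : equivMvPolynomial R (monomial n (monomial m a)) =
          MvPolynomial.monomial (Finsupp.single 0 m + Finsupp.single 1 n) a := by
        simp [← C_mul_X_pow_eq_monomial, MvPolynomial.X_pow_eq_monomial,
          MvPolynomial.C_mul_monomial, MvPolynomial.monomial_mul]
      have hiff : Finsupp.single (0 : Fin 2) m + Finsupp.single 1 n =
          Finsupp.single 0 i + Finsupp.single 1 j ↔ n = j ∧ m = i := by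
        refine ⟨fun h => ?_, fun ⟨hn, hm⟩ => hn ▸ hm ▸ rfl⟩
        have h0 := DFunLike.congr_fun h 0
        have h1 := DFunLike.congr_fun h 1
        simp at h0 h1
        exact ⟨h1, h0⟩
      rw [hmono, MvPolynomial.coeff_monomial, coeff_monomial]
      simp only [hiff]
      split_ifs <;> simp_all [coeff_monomial]

theorem natDegree_coeff_add_le_totalDegree (P : R[X][Y]) {j : ℕ} (hj : P.coeff j ≠ 0) :
    (P.coeff j).natDegree + j ≤ (equivMvPolynomial R P).totalDegree := by
  have hmem : Finsupp.single 0 (P.coeff j).natDegree + Finsupp.single 1 j ∈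
      (equivMvPolynomial R P).support := by
    rw [MvPolynomial.mem_support_iff, coeff_equivMvPolynomial, coeff_natDegree]
    exact leadingCoeff_ne_zero.mpr hj
  simpa [Finsupp.sum_add_index'] using MvPolynomial.le_totalDegree hmem

theorem natDegree_resultant_le_totalDegree_mul (f g : MvPolynomial (Fin 2) R) :
    (resultant ((equivMvPolynomial R).symm f) ((equivMvPolynomial R).symm g)).natDegree ≤
      f.totalDegree * g.totalDegree := by
  have hcoeff (h : MvPolynomial (Fin 2) R) (j : ℕ)
      (hj : ((equivMvPolynomial R).symm h).coeff j ≠ 0) :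
      (((equivMvPolynomial R).symm h).coeff j).natDegree + j ≤ h.totalDegree := by
    simpa using natDegree_coeff_add_le_totalDegree _ hj
  have hdeg (h : MvPolynomial (Fin 2) R) :
      ((equivMvPolynomial R).symm h).natDegree ≤ h.totalDegree := by
    rcases eq_or_ne ((equivMvPolynomial R).symm h) 0 with h0 | h0
    · simp [h0]
    · have := hcoeff h _ (leadingCoeff_ne_zero.mpr h0)
      omega
  refine (natDegree_resultant_le _ _ (hcoeff f) (hcoeff g)).trans ?_
  have hm := hdeg f
  have hn := hdeg g
  rw [Nat.sub_le_iff_le_add]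
  nlinarith

def commonZeros (F G : R[X][Y]) : Set (R × R) :=
  {p | F.evalEval p.1 p.2 = 0 ∧ G.evalEval p.1 p.2 = 0}

theorem eval_resultant_eq_zero_of_mem_commonZeros [Infinite R] {F G : R[X][Y]}
    (hfin : (commonZeros F G).Finite) {p : R × R} (hp : p ∈ commonZeros F G) :
    (resultant F G).eval p.1 = 0 := by
  obtain ⟨x, y⟩ := p
  -- If both `y`-degrees vanish, the whole vertical line through `(x, y)` consists of common zeros.
  have hdeg : F.natDegree ≠ 0 ∨ G.natDegree ≠ 0 := by
    by_contra! h
    refine Set.not_infinite.mpr hfin (Set.infinite_of_injective_forall_mem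
      (f := fun y' => (x, y')) (fun _ _ h => (Prod.ext_iff.mp h).2) fun y' => ?_)
    rw [eq_C_of_natDegree_eq_zero h.1, eq_C_of_natDegree_eq_zero h.2] at hp ⊢
    simpa [commonZeros, evalEval_C] using hp
  obtain ⟨u, v, -, -, huv⟩ := exists_mul_add_mul_eq_C_resultant (F.map (evalRingHom x))
    (G.map (evalRingHom x)) natDegree_map_le natDegree_map_le hdeg
  rw [resultant_map_map, coe_evalRingHom] at huv
  have := congrArg (eval y) huv
  obtain ⟨hFp, hGp⟩ := hp
  simp only [eval_add, eval_mul, map_evalRingHom_eval, eval_C, hFp, hGp, zero_mul,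
    add_zero] at this
  exact this.symm

theorem exists_mem_commonZeros_of_eval_resultant_eq_zero {K : Type*} [Field K] [IsAlgClosed K]
    {F G : K[X][Y]} {x : K} (hF : F.leadingCoeff.eval x ≠ 0) (hG : G.leadingCoeff.eval x ≠ 0)
    (h : (resultant F G).eval x = 0) : ∃ y, (x, y) ∈ commonZeros F G := by
  have hFx := natDegree_map_of_leadingCoeff_ne_zero (evalRingHom x) hF
  have hGx := natDegree_map_of_leadingCoeff_ne_zero (evalRingHom x) hG
  have hres : resultant (F.map (evalRingHom x)) (G.map (evalRingHom x)) = 0 := by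
    rw [resultant, hFx, hGx, ← resultant, resultant_map_map]
    exact h
  have hcop := (resultant_eq_zero_iff.mp hres).2
  rw [isCoprime_iff_aeval_ne_zero_of_isAlgClosed K K] at hcop
  push Not at hcop
  obtain ⟨y, hFy, hGy⟩ := hcop
  rw [coe_aeval_eq_eval, map_evalRingHom_eval] at hFy hGy
  exact ⟨y, hFy, hGy⟩

theorem resultant_ne_zero_of_finite_commonZeros {K : Type*} [Field K] [IsAlgClosed K]
    {F G : K[X][Y]} (hF : F ≠ 0) (hG : G ≠ 0) (hfin : (commonZeros F G).Finite) :
    resultant F G ≠ 0 := by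
  intro h
  have hlc : F.leadingCoeff * G.leadingCoeff ≠ 0 := by simp [hF, hG]
  refine (finite_setOfPred_isRoot hlc).infinite_compl
    (hfin.image Prod.fst |>.subset fun x hx => ?_)
  have hx' : F.leadingCoeff.eval x * G.leadingCoeff.eval x ≠ 0 := by simpa using hx
  obtain ⟨y, hy⟩ := exists_mem_commonZeros_of_eval_resultant_eq_zero (left_ne_zero_of_mul hx')
    (right_ne_zero_of_mul hx') (by simp [h])
  exact ⟨(x, y), hy, rfl⟩

end Polynomial.Bivariate

end

namespace MvPolynomial

theorem totalDegree_aeval_le {σ τ R : Type*} [CommSemiring R] {g : σ → MvPolynomial τ R}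
    (hg : ∀ i, (g i).totalDegree ≤ 1) (p : MvPolynomial σ R) :
    (aeval g p).totalDegree ≤ p.totalDegree := by
  conv_lhs => rw [p.as_sum, map_sum]
  refine (totalDegree_finsetSum _ _).trans (Finset.sup_le fun d hd => ?_)
  rw [aeval_monomial, algebraMap_eq]
  refine (totalDegree_mul _ _).trans ?_
  rw [totalDegree_C, zero_add]
  refine (totalDegree_finsetProd _ _).trans ((Finset.sum_le_sum fun i _ => ?_).trans
    (le_totalDegree hd))
  calc (g i ^ d i).totalDegree ≤ d i * (g i).totalDegree := totalDegree_pow _ _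
    _ ≤ d i * 1 := Nat.mul_le_mul_left _ (hg i)
    _ = d i := mul_one _

variable {R : Type*} [CommRing R]

noncomputable def shear (t : R) : MvPolynomial (Fin 2) R ≃ₐ[R] MvPolynomial (Fin 2) R :=
  AlgEquiv.ofAlgHom (aeval ![X 0 + C t * X 1, X 1]) (aeval ![X 0 - C t * X 1, X 1])
    (by ext i; fin_cases i <;> simp) (by ext i; fin_cases i <;> simp)

theorem eval_shear (t : R) (p : MvPolynomial (Fin 2) R) (x y : R) :
    eval ![x, y] (shear t p) = eval ![x + t * y, y] p := by
  rw [shear, AlgEquiv.ofAlgHom_apply, aeval_eq_bind₁, eval, eval, eval₂Hom_bind₁]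
  congr 2
  funext i
  fin_cases i <;> simp

theorem totalDegree_shear_le (t : R) (p : MvPolynomial (Fin 2) R) :
    (shear t p).totalDegree ≤ p.totalDegree := by
  have hX (i : Fin 2) : (X i : MvPolynomial (Fin 2) R).totalDegree ≤ 1 :=
    (totalDegree_monomial_le (Finsupp.single i 1) (1 : R)).trans_eq (by simp)
  refine totalDegree_aeval_le (fun i => ?_) p
  fin_cases i
  · exact (totalDegree_add _ _).trans (max_le (hX 0)
      ((totalDegree_mul _ _).trans (by simpa using hX 1)))
  · exact hX 1

end MvPolynomial

theorem Set.Finite.exists_injOn_fst_sub_mul_snd {K : Type*} [Field K] [Infinite K]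
    {S : Set (K × K)} (hS : S.Finite) : ∃ t : K, S.InjOn fun p => p.1 - t * p.2 := by
  obtain ⟨t, ht⟩ := ((hS.prod hS).image fun q : (K × K) × (K × K) =>
    (q.1.1 - q.2.1) / (q.1.2 - q.2.2)).infinite_compl.nonempty
  refine ⟨t, fun p hp q hq hpq => ?_⟩
  by_contra hne
  have h2 : p.2 - q.2 ≠ 0 := fun h =>
    hne (Prod.ext (by linear_combination hpq + t * h) (sub_eq_zero.mp h))
  exact ht ⟨(p, q), ⟨hp, hq⟩, by rw [div_eq_iff h2]; linear_combination hpq⟩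

open MvPolynomial

/-- Bézout bound: finitely many common zeros of two nonzero bivariate polynomials
number at most the product of the total degrees. -/
theorem bezout_bound (f g : MvPolynomial (Fin 2) ℂ) (hf : f ≠ 0) (hg : g ≠ 0)
    (hfin : {p : ℂ × ℂ | eval ![p.1, p.2] f = 0 ∧ eval ![p.1, p.2] g = 0}.Finite) :
    {p : ℂ × ℂ | eval ![p.1, p.2] f = 0 ∧ eval ![p.1, p.2] g = 0}.ncard ≤
      f.totalDegree * g.totalDegree := by
  open Polynomial Polynomial.Bivariate in
  set S := {p : ℂ × ℂ | eval ![p.1, p.2] f = 0 ∧ eval ![p.1, p.2] g = 0}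
  obtain ⟨t, ht⟩ := hfin.exists_injOn_fst_sub_mul_snd
  set F := (equivMvPolynomial ℂ).symm (shear t f)
  set G := (equivMvPolynomial ℂ).symm (shear t g)
  have hzeros : commonZeros F G = (fun q : ℂ × ℂ => (q.1 + t * q.2, q.2)) ⁻¹' S := by
    ext q
    simp [commonZeros, F, G, S, ← eval_equivMvPolynomial, eval_shear]
  have hfin' : (commonZeros F G).Finite := hzeros ▸ hfin.preimage fun p _ q _ h => by
    simp only [Prod.ext_iff] at h
    exact Prod.ext (by linear_combination h.1 - t * h.2) h.2
  have hR : resultant F G ≠ 0 := resultant_ne_zero_of_finite_commonZeros (by simpa [F])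
    (by simpa [G]) hfin'
  have hroots : (fun p => p.1 - t * p.2) '' S ⊆ (resultant F G).rootSet ℂ := by
    rintro _ ⟨p, hp, rfl⟩
    rw [mem_rootSet, Polynomial.coe_aeval_eq_eval]
    refine ⟨hR, eval_resultant_eq_zero_of_mem_commonZeros hfin' (p := (_, p.2)) ?_⟩
    simpa [hzeros] using hp
  calc S.ncard = ((fun p => p.1 - t * p.2) '' S).ncard := ht.ncard_image.symm
    _ ≤ ((resultant F G).rootSet ℂ).ncard := Set.ncard_le_ncard hroots (rootSet_finite _ _)
    _ ≤ (resultant F G).natDegree := ncard_rootSet_le _ _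
    _ ≤ (shear t f).totalDegree * (shear t g).totalDegree :=
      natDegree_resultant_le_totalDegree_mul _ _
    _ ≤ f.totalDegree * g.totalDegree :=
      Nat.mul_le_mul (totalDegree_shear_le t f) (totalDegree_shear_le t g)
end

section
/- Let B⁽¹⁾, C⁽¹⁾ ∈ ℂ³ᵖ¹ˣ³ᵖ¹ and B⁽²⁾, C⁽²⁾ ∈ ℂ³ᵖ²ˣ³ᵖ² be block 3×3 matrices whose (2,1), (3,1), (2,2), (3,2) blocks are all zero (i.e., all nonzero blocks lie in the first block row or the third block column). Then the matrix Δ₀ = B⁽¹⁾ ⊗ C⁽²⁾ − C⁽¹⁾ ⊗ B⁽²⁾ is singular: det Δ₀ = 0. -/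
/-!
The rows of `Δ₀` whose two block-row indices are both nonzero — `4 p₁ p₂` of them — vanish
outside the `p₁ p₂` columns whose two block-column indices both equal `2`. Having more rows
than the dimension of the space they live in, they are linearly dependent, so `det Δ₀ = 0`.
-/

open Matrix Kronecker

open Finset Submodule Module in
theorem Matrix.det_eq_zero_of_rows_supported {n K : Type*} [Fintype n] [DecidableEq n] [Field K]
    (M : Matrix n n K) (R S : Finset n) (hcard : S.card < R.card)
    (hM : ∀ r ∈ R, ∀ c ∉ S, M r c = 0) : M.det = 0 := by
  refine det_eq_zero_of_not_linearIndependent_rows fun hli => hcard.not_ge ?_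
  let e : S → n → K := fun c => Pi.single c.1 1
  have hrows : span K (Set.range fun r : R => M r) ≤ span K (Set.range e) := by
    refine span_le.2 ?_
    rintro _ ⟨r, rfl⟩
    have hsum : (M r : n → K) = ∑ c : S, M r c • e c := by
      rw [sum_coe_sort S fun c => M r c • Pi.single c 1]
      simp_rw [← Pi.single_smul', smul_eq_mul, mul_one]
      rw [sum_subset (subset_univ S) fun c _ hc => by rw [hM r r.2 c hc, Pi.single_zero],
        univ_sum_single]
    change (M r : n → K) ∈ _
    rw [hsum]
    exact sum_mem fun c _ => smul_mem _ _ (subset_span ⟨c, rfl⟩)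
  calc R.card = Fintype.card R := (Fintype.card_coe R).symm
    _ = finrank K (span K (Set.range fun r : R => M r)) :=
      (finrank_span_eq_card (hli.comp _ Subtype.val_injective)).symm
    _ ≤ finrank K (span K (Set.range e)) := Submodule.finrank_mono hrows
    _ ≤ Fintype.card S := finrank_range_le_card e
    _ = S.card := Fintype.card_coe S

theorem Matrix.kronecker_apply_eq_zero_of_mem_of_notMem {l m n p R : Type*} [MulZeroClass R]
    {A : Matrix l m R} {B : Matrix n p R} {I : Finset l} {J : Finset m} {I' : Finset n}
    {J' : Finset p} (hA : ∀ i ∈ I, ∀ j ∉ J, A i j = 0) (hB : ∀ i ∈ I', ∀ j ∉ J', B i j = 0)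
    {i : l × n} (hi : i ∈ I ×ˢ I') {j : m × p} (hj : j ∉ J ×ˢ J') : (A ⊗ₖ B) i j = 0 := by
  rw [Finset.mem_product] at hi
  rw [Finset.mem_product, not_and_or] at hj
  rw [kroneckerMap_apply]
  rcases hj with hj | hj
  · rw [hA _ hi.1 _ hj, zero_mul]
  · rw [hB _ hi.2 _ hj, mul_zero]

open Finset in
theorem Matrix.blockPattern_apply_eq_zero {α β R : Type*} [Fintype α] [Fintype β] [Zero R]
    {A : Matrix (Fin 3 × α) (Fin 3 × β) R} (hA : ∀ p q, p.1 ≠ 0 → q.1 ≠ 2 → A p q = 0) :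
    ∀ i ∈ ({1, 2} ×ˢ univ : Finset (Fin 3 × α)), ∀ j ∉ ({2} ×ˢ univ : Finset (Fin 3 × β)),
      A i j = 0 := by
  intro i hi j hj
  simp only [mem_product, mem_insert, mem_singleton, mem_univ, and_true] at hi hj
  exact hA i j (by omega) hj

open Finset in
theorem delta0_singular {p1 p2 : ℕ} (hp1 : 0 < p1) (hp2 : 0 < p2)
    (B1 C1 : Matrix (Fin 3 × Fin p1) (Fin 3 × Fin p1) ℂ)
    (B2 C2 : Matrix (Fin 3 × Fin p2) (Fin 3 × Fin p2) ℂ)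
    (hB1 : ∀ p q, p.1 ≠ 0 → q.1 ≠ 2 → B1 p q = 0)
    (hC1 : ∀ p q, p.1 ≠ 0 → q.1 ≠ 2 → C1 p q = 0)
    (hB2 : ∀ p q, p.1 ≠ 0 → q.1 ≠ 2 → B2 p q = 0)
    (hC2 : ∀ p q, p.1 ≠ 0 → q.1 ≠ 2 → C2 p q = 0) :
    (B1 ⊗ₖ C2 - C1 ⊗ₖ B2).det = 0 := by
  refine det_eq_zero_of_rows_supported _ (({1, 2} ×ˢ univ) ×ˢ ({1, 2} ×ˢ univ))
    (({2} ×ˢ univ) ×ˢ ({2} ×ˢ univ)) ?_ fun r hr c hc => ?_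
  · simp only [card_product, card_univ, Fintype.card_fin, card_singleton]
    rw [show ({1, 2} : Finset (Fin 3)).card = 2 from rfl]
    nlinarith [Nat.mul_pos hp1 hp2]
  · rw [Matrix.sub_apply,
      kronecker_apply_eq_zero_of_mem_of_notMem (blockPattern_apply_eq_zero hB1)
        (blockPattern_apply_eq_zero hC2) hr hc,
      kronecker_apply_eq_zero_of_mem_of_notMem (blockPattern_apply_eq_zero hC1)
        (blockPattern_apply_eq_zero hB2) hr hc, sub_zero]
end
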